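/- Let ψ : {1,…,n} → ℂ and let P be the homogeneous operator of degree 0 associated to ψ, i.e. P(e_i) = ψ(i)·e_i for all i. Then P is a Rota–Baxter operator of weight 1, i.e. P(x)·P(y) = P(x·P(y) + P(x)·y + x·y) for all x, y ∈ A, if and only if, writing a = ψ(1), one has ψ(i)·((a+1)^i − a^i) = a^i for all 1 ≤ i ≤ n (equivalently, (a+1)^i ≠ a^i for all 1 ≤ i ≤ n and ψ(i) = a^i / ((a+1)^i − a^i)). -/
import Mathlib


open Finset

/-- Coordinate space of the `n`-dimensional complex null-filiform associative algebra,
with respect to the basis `e_1, …, e_n` (coordinate `m : Fin n` corresponds to `e_{m+1}`). -/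
abbrev NF (n : ℕ) : Type := Fin n → ℂ

/-- Multiplication of the null-filiform algebra: `e_i · e_j = e_{i+j}` if `i + j ≤ n`
and `e_i · e_j = 0` if `i + j > n`, extended bilinearly. -/
noncomputable def nfMul {n : ℕ} (x y : NF n) : NF n :=
  fun m => ∑ i : Fin n, ∑ j : Fin n,
    if (i : ℕ) + (j : ℕ) + 1 = (m : ℕ) then x i * y j else 0

/-- The basis element `e_k`, for `1 ≤ k ≤ n` (it is `0` if `k = 0` or `k > n`). -/
noncomputable def nfE (n k : ℕ) : NF n := fun m => if (m : ℕ) + 1 = k then 1 else 0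

/-- The `k`-th power (for `k ≥ 1`) of an element of the null-filiform algebra. -/
noncomputable def nfPow {n : ℕ} (x : NF n) : ℕ → NF n
  | 0 => 0
  | 1 => x
  | k + 2 => nfMul (nfPow x (k + 1)) x

lemma nfMul_smul_left {n : ℕ} (c : ℂ) (x y : NF n) : nfMul (c • x) y = c • nfMul x y := by
  funext m
  simp only [nfMul, Pi.smul_apply, smul_eq_mul, Finset.mul_sum]
  refine Finset.sum_congr rfl fun i _ => Finset.sum_congr rfl fun j _ => ?_
  split_ifs <;> ring

lemma nfMul_smul_right {n : ℕ} (c : ℂ) (x y : NF n) : nfMul x (c • y) = c • nfMul x y := by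
  funext m
  simp only [nfMul, Pi.smul_apply, smul_eq_mul, Finset.mul_sum]
  refine Finset.sum_congr rfl fun i _ => Finset.sum_congr rfl fun j _ => ?_
  split_ifs <;> ring

lemma nfMul_E {n : ℕ} {i j : ℕ} (hi : 1 ≤ i) (hj : 1 ≤ j) :
    nfMul (nfE n i) (nfE n j) = nfE n (i + j) := by
  funext m
  simp only [nfMul, nfE]
  by_cases hm : (m : ℕ) + 1 = i + j
  · rw [if_pos hm]
    have hib : i - 1 < n := by omega
    have hjb : j - 1 < n := by omega
    rw [Finset.sum_eq_single (⟨i - 1, hib⟩ : Fin n)]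
    · rw [Finset.sum_eq_single (⟨j - 1, hjb⟩ : Fin n)]
      · simp only
        rw [if_pos (by omega), if_pos (by omega), if_pos (by omega)]
        ring
      · intro q _ hq
        by_cases hq2 : (q : ℕ) + 1 = j
        · exact absurd (Fin.ext (by simp only [Fin.val_mk]; omega)) hq
        · rw [if_neg hq2, mul_zero, ite_self]
      · intro h; exact absurd (Finset.mem_univ _) h
    · intro p _ hp
      apply Finset.sum_eq_zero
      intro q _
      by_cases hp2 : (p : ℕ) + 1 = i
      · exact absurd (Fin.ext (by simp only [Fin.val_mk]; omega)) hp
      · rw [if_neg hp2, zero_mul, ite_self]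
    · intro h; exact absurd (Finset.mem_univ _) h
  · rw [if_neg hm]
    apply Finset.sum_eq_zero; intro p _
    apply Finset.sum_eq_zero; intro q _
    by_cases hc : (p : ℕ) + (q : ℕ) + 1 = (m : ℕ)
    · rw [if_pos hc]
      by_cases hp2 : (p : ℕ) + 1 = i
      · rw [if_pos hp2, one_mul, if_neg (show ¬((q : ℕ) + 1 = j) by omega)]
      · rw [if_neg hp2, zero_mul]
    · rw [if_neg hc]

/-- The homogeneous operator of degree `0` associated to `ψ` is a Rota–Baxter operator of
weight `1` iff, with `a = ψ(1)`, one has `ψ(i)·((a+1)^i − a^i) = a^i` for all `1 ≤ i ≤ n`. -/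
theorem rota_baxter_weight1_degree0 (n : ℕ) (hn : 1 ≤ n)
    (ψ : ℕ → ℂ) (P : NF n →ₗ[ℂ] NF n)
    (hP : ∀ i, 1 ≤ i → i ≤ n → P (nfE n i) = ψ i • nfE n i) :
    (∀ x y : NF n,
      nfMul (P x) (P y) = P (nfMul x (P y) + nfMul (P x) y + nfMul x y)) ↔
      (∀ i, 1 ≤ i → i ≤ n →
        ψ i * ((ψ 1 + 1) ^ i - (ψ 1) ^ i) = (ψ 1) ^ i) := by
  have hzero : ∀ k, n < k → nfE n k = 0 := by
    intro k hk; funext m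
    simp only [nfE]
    rw [if_neg (by omega), Pi.zero_apply]
  have hPE : ∀ k, 1 ≤ k → P (nfE n k) = ψ k • nfE n k := by
    intro k hk
    by_cases h : k ≤ n
    · exact hP k hk h
    · rw [hzero k (by omega), map_zero, smul_zero]
  have hPcoord : ∀ (x : NF n) (m : Fin n), P x m = ψ ((m : ℕ) + 1) * x m := by
    intro x m
    have hx : x = ∑ p : Fin n, x p • nfE n ((p : ℕ) + 1) := by
      funext q
      simp only [Finset.sum_apply, Pi.smul_apply, nfE, smul_eq_mul]
      rw [Finset.sum_eq_single q]
      · rw [if_pos rfl, mul_one]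
      · intro p _ hpq
        rw [if_neg (fun hc => hpq (Fin.ext (by omega))), mul_zero]
      · intro h; exact absurd (Finset.mem_univ _) h
    conv_lhs => rw [hx, map_sum]
    have : ∀ p : Fin n, P (x p • nfE n ((p : ℕ) + 1)) = (x p * ψ ((p : ℕ) + 1)) • nfE n ((p : ℕ) + 1) := by
      intro p
      rw [map_smul, hPE _ (Nat.le_add_left 1 _), smul_smul]
    rw [Finset.sum_congr rfl fun p _ => this p]
    simp only [Finset.sum_apply, Pi.smul_apply, nfE, smul_eq_mul]
    rw [Finset.sum_eq_single m]
    · rw [if_pos rfl, mul_one]; ring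
    · intro p _ hpq
      rw [if_neg (fun hc => hpq (Fin.ext (by omega))), mul_zero]
    · intro h; exact absurd (Finset.mem_univ _) h
  constructor
  · -- RB → formula
    intro hRB i hi1 hin
    have B : ∀ k, 1 ≤ k → k + 1 ≤ n →
        ψ k * ψ 1 = (ψ 1 + ψ k + 1) * ψ (k + 1) := by
      intro k hk1 hkn
      have h := hRB (nfE n k) (nfE n 1)
      rw [hP k hk1 (by omega), hP 1 le_rfl hn] at h
      simp only [nfMul_smul_left, nfMul_smul_right, nfMul_E hk1 le_rfl, map_add, map_smul,
        hPE (k + 1) (by omega)] at h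
      have h2 := congrFun h (⟨k, by omega⟩ : Fin n)
      simp only [Pi.smul_apply, Pi.add_apply, nfE, smul_eq_mul, Fin.val_mk, if_pos rfl, if_true] at h2
      linear_combination h2
    clear hRB
    induction i with
    | zero => omega
    | succ k ih =>
      by_cases hk0 : k = 0
      · subst hk0; norm_num
      · have hk1 : 1 ≤ k := by omega
        have hk := ih hk1 (by omega)
        have hB := B k hk1 hin
        have key : (ψ k + (ψ 1 + 1)) * ((ψ 1 + 1) ^ k - ψ 1 ^ k)
            = (ψ 1 + 1) ^ (k + 1) - ψ 1 ^ (k + 1) := by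
          linear_combination hk
        linear_combination (-((ψ 1 + 1) ^ k - ψ 1 ^ k)) * hB + ψ 1 * hk - ψ (k + 1) * key
  · -- formula → RB
    intro H
    have hne : ∀ i, 1 ≤ i → i ≤ n → (ψ 1 + 1) ^ i - ψ 1 ^ i ≠ 0 := by
      intro i h1 h2 hz
      have h3 := H i h1 h2
      rw [hz, mul_zero] at h3
      have ha : ψ 1 = 0 := (pow_eq_zero_iff (by omega : i ≠ 0)).mp h3.symm
      rw [ha, zero_pow (by omega : i ≠ 0)] at hz
      norm_num at hz
    have B : ∀ i j, 1 ≤ i → 1 ≤ j → i + j ≤ n →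
        ψ i * ψ j = (ψ j + ψ i + 1) * ψ (i + j) := by
      intro i j hi hj hij
      have Hi := H i hi (by omega)
      have Hj := H j hj (by omega)
      have Hij := H (i + j) (by omega) hij
      have di := hne i hi (by omega)
      have dj := hne j hj (by omega)
      have dij := hne (i + j) (by omega) hij
      have ei : ψ i = ψ 1 ^ i / ((ψ 1 + 1) ^ i - ψ 1 ^ i) := (eq_div_iff di).mpr Hi
      have ej : ψ j = ψ 1 ^ j / ((ψ 1 + 1) ^ j - ψ 1 ^ j) := (eq_div_iff dj).mpr Hj
      have eij : ψ (i + j) = ψ 1 ^ (i + j) / ((ψ 1 + 1) ^ (i + j) - ψ 1 ^ (i + j)) :=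
        (eq_div_iff dij).mpr Hij
      rw [ei, ej, eij]
      field_simp
      ring
    intro x y
    funext r
    rw [hPcoord]
    simp only [nfMul, Pi.add_apply, hPcoord]
    simp only [← Finset.sum_add_distrib, Finset.mul_sum]
    refine Finset.sum_congr rfl fun i _ => Finset.sum_congr rfl fun j _ => ?_
    split_ifs with hc
    · have hB := B ((i : ℕ) + 1) ((j : ℕ) + 1) (by omega) (by omega) (by omega)
      have hr : (r : ℕ) + 1 = (i : ℕ) + 1 + ((j : ℕ) + 1) := by omega
      rw [hr]
      linear_combination x i * y j * hB
    · ring
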